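/- Let (X, d) be a nonempty complete metric space, ψ: X → X a contraction with ratio a ∈ (0,1), and (f_n) a sequence of contractions of X with the same ratio a such that sup_{x} d(f_n(x), ψ(x)) → 0 (or merely f_n → ψ pointwise). Then for every x₀ ∈ X, the sequence x_n := f_n ∘ ⋯ ∘ f₂ ∘ f₁(x₀) converges to the unique fixed point of ψ. -/

import Mathlib

/-!
The distance `u n := d(x_n, y)` to the fixed point `y` of `ψ` obeys
`u (n + 1) ≤ a * u n + d(f_{n+1} y, y)` and the error term tends to `0`, because `f_n y → ψ y = y`.
A contracting recursion with vanishing perturbation forces `u n → 0`.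
-/

open Filter Topology NNReal

theorem le_pow_mul_add_of_le_mul_add {u : ℕ → ℝ} {a c : ℝ} (ha : 0 ≤ a)
    (hrec : ∀ n, u (n + 1) ≤ a * u n + (1 - a) * c) (n : ℕ) :
    u n ≤ a ^ n * (u 0 - c) + c := by
  induction n with
  | zero => simp
  | succ n ih =>
    calc u (n + 1) ≤ a * u n + (1 - a) * c := hrec n
      _ ≤ a * (a ^ n * (u 0 - c) + c) + (1 - a) * c := by gcongr
      _ = a ^ (n + 1) * (u 0 - c) + c := by ring

theorem tendsto_zero_of_le_mul_add {u e : ℕ → ℝ} {a : ℝ} (ha0 : 0 ≤ a) (ha1 : a < 1)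
    (hu : ∀ n, 0 ≤ u n) (he : Tendsto e atTop (𝓝 0))
    (hrec : ∀ n, u (n + 1) ≤ a * u n + e n) :
    Tendsto u atTop (𝓝 0) := by
  refine tendsto_order.2 ⟨fun b hb => .of_forall fun n => hb.trans_le (hu n), fun ε hε => ?_⟩
  obtain ⟨N, hN⟩ := eventually_atTop.1 <|
    (tendsto_order.1 he).2 ((1 - a) * (ε / 2)) (by nlinarith)
  have hbound : ∀ k, u (N + k) ≤ a ^ k * (u N - ε / 2) + ε / 2 :=
    le_pow_mul_add_of_le_mul_add (u := fun k => u (N + k)) ha0 fun k =>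
      (hrec (N + k)).trans (by gcongr; exact (hN _ (Nat.le_add_right N k)).le)
  have hgeom : Tendsto (fun k => a ^ k * (u N - ε / 2)) atTop (𝓝 0) := by
    simpa using (tendsto_pow_atTop_nhds_zero_of_lt_one ha0 ha1).mul_const (u N - ε / 2)
  obtain ⟨K, hK⟩ := eventually_atTop.1 <| (tendsto_order.1 hgeom).2 (ε / 2) (by positivity)
  refine eventually_atTop.2 ⟨N + K, fun n hn => ?_⟩
  obtain ⟨k, rfl⟩ := Nat.exists_eq_add_of_le (le_of_add_le_left hn)
  linarith [hbound k, hK k (by omega)]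

theorem tendsto_nonautonomous_orbit {X : Type*} [PseudoMetricSpace X] {K : ℝ≥0} (hK : K < 1)
    {f : ℕ → X → X} (hf : ∀ n, LipschitzWith K (f n)) {y : X}
    (hy : Tendsto (fun n => f n y) atTop (𝓝 y)) {x : ℕ → X}
    (hx : ∀ n, x (n + 1) = f (n + 1) (x n)) :
    Tendsto x atTop (𝓝 y) := by
  rw [tendsto_iff_dist_tendsto_zero] at hy ⊢
  refine tendsto_zero_of_le_mul_add K.2 hK (fun n => dist_nonneg)
    ((tendsto_add_atTop_iff_nat 1).2 hy) fun n => ?_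
  calc dist (x (n + 1)) y
      ≤ dist (f (n + 1) (x n)) (f (n + 1) y) + dist (f (n + 1) y) y :=
        hx n ▸ dist_triangle _ _ _
    _ ≤ K * dist (x n) y + dist (f (n + 1) y) y := by
        gcongr; exact (hf (n + 1)).dist_le_mul _ _

theorem nonautonomous_contraction_iteration_general
    {X : Type*} [MetricSpace X] [CompleteSpace X]
    (a : ℝ) (ha0 : 0 < a) (ha1 : a < 1)
    (ψ : X → X) (hψ : ∀ x y, dist (ψ x) (ψ y) ≤ a * dist x y)
    (f : ℕ → X → X) (hf : ∀ n x y, dist (f n x) (f n y) ≤ a * dist x y)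
    (hconv : ∀ z : X, Tendsto (fun n => f n z) atTop (nhds (ψ z)))
    (x : ℕ → X)
    (hxs : ∀ n, x (n + 1) = f (n + 1) (x n)) :
    ∃ y : X, ψ y = y ∧ (∀ z, ψ z = z → z = y) ∧
      Tendsto x atTop (nhds y) := by
  have : Nonempty X := ⟨x 0⟩
  let K : ℝ≥0 := ⟨a, ha0.le⟩
  have hK : K < 1 := ha1
  have hψK : ContractingWith K ψ := ⟨hK, .of_dist_le_mul hψ⟩
  have hfix : ψ hψK.fixedPoint = hψK.fixedPoint := hψK.fixedPoint_isFixedPt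
  refine ⟨_, hfix, fun z hz => hψK.fixedPoint_unique hz, ?_⟩
  exact tendsto_nonautonomous_orbit hK (fun n => .of_dist_le_mul (hf n))
    (by simpa only [hfix] using hconv hψK.fixedPoint) hxs

/-- **Nonautonomous contraction iteration (Arnaud–Humilière–Viterbo,
Prop. 3.8).**  Let `(X, d)` be a nonempty complete metric space,
`ψ : X → X` a contraction of ratio `a ∈ (0,1)`, and `(f_n)` a sequence
of contractions of the same ratio converging to `ψ` pointwise (which is
implied by uniform convergence).  Then for every `x₀ ∈ X` the sequence
`x_n = f_n ∘ ⋯ ∘ f₂ ∘ f₁ (x₀)` converges to the unique fixed point of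
`ψ`. -/
theorem nonautonomous_contraction_iteration
    {X : Type*} [MetricSpace X] [CompleteSpace X] [Nonempty X]
    (a : ℝ) (ha0 : 0 < a) (ha1 : a < 1)
    (ψ : X → X) (hψ : ∀ x y, dist (ψ x) (ψ y) ≤ a * dist x y)
    (f : ℕ → X → X) (hf : ∀ n x y, dist (f n x) (f n y) ≤ a * dist x y)
    (hconv : ∀ z : X, Tendsto (fun n => f n z) atTop (nhds (ψ z)))
    (x₀ : X) (x : ℕ → X)
    (hx0 : x 0 = x₀) (hxs : ∀ n, x (n + 1) = f (n + 1) (x n)) :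
    ∃ y : X, ψ y = y ∧ (∀ z, ψ z = z → z = y) ∧
      Tendsto x atTop (nhds y) :=
  nonautonomous_contraction_iteration_general a ha0 ha1 ψ hψ f hf hconv x hxs
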